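/- arXiv:2308.04856 — 5 statements merged into one kernel-verified Lean document; each statement's English description precedes it below -/
import Mathlib

section
/- Let E be a complete Hausdorff locally convex topological vector space over ℝ, let a ≤ b be real numbers, and let γ : ℝ → E be continuous on the interval [a,b]. Then there exists a unique element x ∈ E such that l(x) = ∫ₐᵇ l(γ(t)) dt for every continuous linear functional l : E → ℝ; moreover, this x satisfies p(x) ≤ ∫ₐᵇ p(γ(t)) dt for every continuous seminorm p on E. -/
/-!
The closed convex hull `K` of `γ '' [a, b]` is compact, since `E` is complete and locally
convex. For finitely many functionals `l₁, …, lₙ`, the integral of `(lᵢ ∘ γ)ᵢ` in `ℝⁿ` is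
`b - a` times a point of the closed convex set `(lᵢ)ᵢ '' K`. Hence the closed sets
`{y ∈ K | (b - a) * l y = ∫ l ∘ γ}` have the finite intersection property, some `y` lies in
all of them, and `x = (b - a) • y`. Uniqueness holds because the dual separates points; the
seminorm bound comes from integrating `l ≤ p` for a Hahn–Banach functional with `l x = p x`.
-/

open MeasureTheory Set

theorem Convex.exists_mem_smul_eq_intervalIntegral {F : Type*} [NormedAddCommGroup F]
    [NormedSpace ℝ F] [CompleteSpace F] {s : Set F} (hs : Convex ℝ s) (hsc : IsClosed s)
    {a b : ℝ} (hab : a ≤ b) {f : ℝ → F} (hf : ContinuousOn f (Icc a b))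
    (hfs : MapsTo f (Icc a b) s) :
    ∃ z ∈ s, (b - a) • z = ∫ t in a..b, f t := by
  rcases hab.eq_or_lt with rfl | hlt
  · exact ⟨f a, hfs ⟨le_rfl, le_rfl⟩, by simp⟩
  refine ⟨⨍ t in a..b, f t, ?_, by
    rw [interval_average_eq, smul_inv_smul₀ (sub_ne_zero.2 hlt.ne')]⟩
  rw [uIoc_of_le hab]
  refine hs.set_average_mem hsc (by simp [hlt]) (by simp) ?_
    ((hf.integrableOn_Icc).mono_set Ioc_subset_Icc_self)
  exact (ae_restrict_iff' measurableSet_Ioc).2 <|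
    .of_forall fun t ht ↦ hfs (Ioc_subset_Icc_self ht)

theorem Seminorm.exists_strongDual_apply_eq_of_continuous {E : Type*} [AddCommGroup E]
    [Module ℝ E] [TopologicalSpace E] [PolynormableSpace ℝ E] {p : Seminorm ℝ E}
    (hp : Continuous p) (x : E) :
    ∃ l : E →L[ℝ] ℝ, l x = p x ∧ ∀ y, |l y| ≤ p y := by
  rcases eq_or_ne x 0 with rfl | hx
  · exact ⟨0, by simp, by simp⟩
  let coord := LinearEquiv.coord ℝ E x hx
  obtain ⟨l, hlx, hlp⟩ := Module.Dual.exists_continuous_extension_of_le_seminorm_real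
    (ℝ ∙ x) (p x • coord.toLinearMap) hp fun y ↦ by
      calc p x • coord y = coord y * p x := mul_comm _ _
        _ ≤ |coord y| * p x := by gcongr; exact le_abs_self _
        _ = p y := by rw [← Real.norm_eq_abs, ← map_smul_eq_mul, LinearEquiv.coord_apply_smul]
  refine ⟨l, ?_, hlp⟩
  simpa [coord, LinearEquiv.coord_self] using hlx ⟨x, Submodule.mem_span_singleton_self x⟩

theorem IsCompact.closedConvexHull {E : Type*} [AddCommGroup E] [Module ℝ E] [UniformSpace E]
    [IsUniformAddGroup E] [ContinuousSMul ℝ E] [LocallyConvexSpace ℝ E] [CompleteSpace E]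
    {s : Set E} (hs : IsCompact s) : IsCompact (closedConvexHull ℝ s) := by
  rw [closedConvexHull_eq_closure_convexHull]
  exact (totallyBounded_convexHull.2 hs.totallyBounded).closure.isCompact_of_isClosed
    isClosed_closure

section

variable {E : Type*} [AddCommGroup E] [Module ℝ E] {a b : ℝ} {γ : ℝ → E}

theorem IsCompact.exists_mem_forall_smul_apply_eq_intervalIntegral [TopologicalSpace E]
    {ι : Type*} [Fintype ι] {K : Set E} (hK : IsCompact K) (hKconv : Convex ℝ K) (hab : a ≤ b)
    (hγ : ContinuousOn γ (Icc a b)) (hγK : MapsTo γ (Icc a b) K) (l : ι → E →L[ℝ] ℝ) :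
    ∃ y ∈ K, ∀ i, (b - a) * l i y = ∫ t in a..b, l i (γ t) := by
  let Φ : E →L[ℝ] (ι → ℝ) := .pi l
  obtain ⟨_, ⟨y, hyK, rfl⟩, hy⟩ :=
    (hKconv.linear_image Φ.toLinearMap).exists_mem_smul_eq_intervalIntegral
      (hK.image Φ.continuous).isClosed hab (Φ.continuous.comp_continuousOn hγ)
      ((mapsTo_image Φ K).comp hγK)
  rw [ContinuousLinearMap.coe_coe] at hy
  refine ⟨y, hyK, fun i ↦ ?_⟩
  have hint : IntervalIntegrable (Φ ∘ γ) volume a b :=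
    (Φ.continuous.comp_continuousOn hγ).intervalIntegrable_of_Icc hab
  have hproj := ContinuousLinearMap.intervalIntegral_comp_comm
    (ContinuousLinearMap.proj (R := ℝ) (φ := fun _ : ι ↦ ℝ) i) hint
  calc (b - a) * l i y = ContinuousLinearMap.proj i ((b - a) • Φ y) := rfl
    _ = ∫ t in a..b, l i (γ t) := by
      rw [hy, ← hproj]
      rfl

variable [UniformSpace E] [IsUniformAddGroup E] [ContinuousSMul ℝ E] [LocallyConvexSpace ℝ E]
  [CompleteSpace E]

theorem exists_mem_closedConvexHull_forall_smul_apply_eq_intervalIntegral (hab : a ≤ b)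
    (hγ : ContinuousOn γ (Icc a b)) :
    ∃ y ∈ closedConvexHull ℝ (γ '' Icc a b),
      ∀ l : E →L[ℝ] ℝ, (b - a) * l y = ∫ t in a..b, l (γ t) := by
  have hK := (isCompact_Icc.image_of_continuousOn hγ).closedConvexHull (E := E)
  let H (l : E →L[ℝ] ℝ) : Set E := {y | (b - a) * l y = ∫ t in a..b, l (γ t)}
  have hfin (S : Finset (E →L[ℝ] ℝ)) :
      (closedConvexHull ℝ (γ '' Icc a b) ∩ ⋂ l ∈ S, H l).Nonempty := by
    obtain ⟨y, hyK, hy⟩ := hK.exists_mem_forall_smul_apply_eq_intervalIntegral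
      convex_closedConvexHull hab hγ
      (fun t ht ↦ subset_closedConvexHull (mem_image_of_mem γ ht))
      (fun l : S ↦ (l : E →L[ℝ] ℝ))
    exact ⟨y, hyK, mem_iInter₂.2 fun l hl ↦ hy ⟨l, hl⟩⟩
  obtain ⟨y, hyK, hy⟩ :=
    hK.inter_iInter_nonempty H (fun l ↦ isClosed_eq (by fun_prop) continuous_const) hfin
  exact ⟨y, hyK, mem_iInter.1 hy⟩

theorem exists_forall_apply_eq_intervalIntegral (hab : a ≤ b) (hγ : ContinuousOn γ (Icc a b)) :
    ∃ x : E, ∀ l : E →L[ℝ] ℝ, l x = ∫ t in a..b, l (γ t) := by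
  obtain ⟨y, -, hy⟩ :=
    exists_mem_closedConvexHull_forall_smul_apply_eq_intervalIntegral hab hγ
  exact ⟨(b - a) • y, fun l ↦ by simpa using hy l⟩

end

theorem Seminorm.apply_le_intervalIntegral_of_forall_strongDual {E : Type*} [AddCommGroup E]
    [Module ℝ E] [TopologicalSpace E] [PolynormableSpace ℝ E] {p : Seminorm ℝ E}
    (hp : Continuous p) {a b : ℝ} (hab : a ≤ b) {γ : ℝ → E}
    (hγ : ContinuousOn γ (Icc a b)) {x : E}
    (hx : ∀ l : E →L[ℝ] ℝ, l x = ∫ t in a..b, l (γ t)) :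
    p x ≤ ∫ t in a..b, p (γ t) := by
  obtain ⟨l, hlx, hlp⟩ := Seminorm.exists_strongDual_apply_eq_of_continuous hp x
  rw [← hlx, hx l]
  exact intervalIntegral.integral_mono_on hab
    ((l.continuous.comp_continuousOn hγ).intervalIntegrable_of_Icc hab)
    ((hp.comp_continuousOn hγ).intervalIntegrable_of_Icc hab)
    fun t _ ↦ (le_abs_self _).trans (hlp _)

/-- Riemann integral of a continuous curve in a complete Hausdorff locally convex space:
there is a unique element `x` with `l x = ∫ₐᵇ l (γ t) dt` for every continuous linear
functional `l`, and it satisfies `p x ≤ ∫ₐᵇ p (γ t) dt` for every continuous seminorm `p`. -/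
theorem riemann_integral_in_complete_lcs
    {E : Type*} [AddCommGroup E] [Module ℝ E] [UniformSpace E] [IsUniformAddGroup E]
    [ContinuousSMul ℝ E] [LocallyConvexSpace ℝ E] [T2Space E] [CompleteSpace E]
    (a b : ℝ) (hab : a ≤ b) (γ : ℝ → E) (hγ : ContinuousOn γ (Set.Icc a b)) :
    ∃ x : E,
      (∀ l : E →L[ℝ] ℝ, l x = ∫ t in a..b, l (γ t)) ∧
      (∀ y : E, (∀ l : E →L[ℝ] ℝ, l y = ∫ t in a..b, l (γ t)) → y = x) ∧
      (∀ p : Seminorm ℝ E, Continuous (p : E → ℝ) → p x ≤ ∫ t in a..b, p (γ t)) := by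
  obtain ⟨x, hx⟩ := exists_forall_apply_eq_intervalIntegral hab hγ
  refine ⟨x, hx, fun y hy ↦ ?_, fun p hp ↦ ?_⟩
  · exact SeparatingDual.eq_iff_forall_dual_eq.2 fun l ↦ (hy l).trans (hx l).symm
  · exact p.apply_le_intervalIntegral_of_forall_strongDual hp hab hγ hx
end

section
/- Let M be a paracompact Hausdorff topological space and (N,d) a metric space, and equip C(M,N) with the graph topology. For φ ∈ C(M,N) and a continuous function ε : M → ℝ with ε(x) > 0 for all x ∈ M, set W_φ(ε) = {ψ ∈ C(M,N) : d(φ(x), ψ(x)) < ε(x) for all x ∈ M}. Then each W_φ(ε) is open in the graph topology, and the family of all sets W_φ(ε), as ε ranges over continuous strictly positive real-valued functions on M, is a neighborhood basis of φ: every graph-open set containing φ contains some W_φ(ε). -/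
/-- The graph (Whitney C⁰, or WO⁰) topology on `C(M, N)`: generated by the sets
`{g | ∀ x, (x, g x) ∈ W}` with `W ⊆ M × N` open. -/
def graphTopology (M N : Type*) [TopologicalSpace M] [TopologicalSpace N] :
    TopologicalSpace C(M, N) :=
  TopologicalSpace.generateFrom
    {S | ∃ W : Set (M × N), IsOpen W ∧ S = {g : C(M, N) | ∀ x : M, (x, g x) ∈ W}}

/-- Every graph-open set containing `φ` contains a basic one. -/
lemma graph_basic_of_mem {M N : Type*} [TopologicalSpace M] [TopologicalSpace N]
    (φ : C(M, N)) (U : Set C(M, N)) (hU : @IsOpen _ (graphTopology M N) U) (hφU : φ ∈ U) :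
    ∃ W : Set (M × N), IsOpen W ∧ (∀ x, (x, φ x) ∈ W) ∧
      {g : C(M, N) | ∀ x, (x, g x) ∈ W} ⊆ U := by
  have hU' : TopologicalSpace.GenerateOpen
      {S | ∃ W : Set (M × N), IsOpen W ∧ S = {g : C(M, N) | ∀ x : M, (x, g x) ∈ W}} U := hU
  clear hU
  induction hU' with
  | basic S hS =>
      obtain ⟨W, hW, rfl⟩ := hS
      exact ⟨W, hW, hφU, subset_rfl⟩
  | univ => exact ⟨Set.univ, isOpen_univ, fun _ => trivial, fun _ _ => trivial⟩
  | inter S T hS hT ihS ihT =>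
      obtain ⟨W₁, h₁, hφ₁, hsub₁⟩ := ihS hφU.1
      obtain ⟨W₂, h₂, hφ₂, hsub₂⟩ := ihT hφU.2
      exact ⟨W₁ ∩ W₂, h₁.inter h₂, fun x => ⟨hφ₁ x, hφ₂ x⟩,
        fun g hg => ⟨hsub₁ (fun x => (hg x).1), hsub₂ (fun x => (hg x).2)⟩⟩
  | sUnion 𝒮 h ih =>
      obtain ⟨S, hS𝒮, hφS⟩ := hφU
      obtain ⟨W, hW, hφW, hsub⟩ := ih S hS𝒮 hφS
      exact ⟨W, hW, hφW, hsub.trans (Set.subset_sUnion_of_mem hS𝒮)⟩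

/-- When `M` is paracompact Hausdorff and `N` metric, the sets
`W_φ(ε) = {ψ | d(φ x, ψ x) < ε x ∀ x}`, for `ε` continuous and strictly positive,
are open and form a neighborhood basis of `φ` in the graph topology. -/
theorem graph_topology_metric_basis
    {M N : Type*} [TopologicalSpace M] [ParacompactSpace M] [T2Space M] [MetricSpace N]
    (φ : C(M, N)) :
    (∀ ε : M → ℝ, Continuous ε → (∀ x, 0 < ε x) →
      @IsOpen _ (graphTopology M N) {ψ : C(M, N) | ∀ x, dist (φ x) (ψ x) < ε x}) ∧
    (∀ U : Set C(M, N), @IsOpen _ (graphTopology M N) U → φ ∈ U →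
      ∃ ε : M → ℝ, Continuous ε ∧ (∀ x, 0 < ε x) ∧
        {ψ : C(M, N) | ∀ x, dist (φ x) (ψ x) < ε x} ⊆ U) := by
  constructor
  · intro ε hε hεpos
    apply TopologicalSpace.GenerateOpen.basic
    refine ⟨{p : M × N | dist (φ p.1) p.2 < ε p.1}, ?_, rfl⟩
    exact isOpen_lt (by fun_prop) (hε.comp continuous_fst)
  · intro U hU hφU
    obtain ⟨W, hW, hφW, hWU⟩ := graph_basic_of_mem φ U hU hφU
    set t : M → Set ℝ := fun x => {r : ℝ | 0 < r ∧ ∀ y : N, dist (φ x) y < r → (x, y) ∈ W}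
    have ht : ∀ x, Convex ℝ (t x) := by
      intro x
      rw [convex_iff_ordConnected]
      constructor
      intro a ha b hb c hc
      exact ⟨lt_of_lt_of_le ha.1 hc.1, fun y hy => hb.2 y (lt_of_lt_of_le hy hc.2)⟩
    have H : ∀ x : M, ∃ c : ℝ, ∀ᶠ x' in nhds x, c ∈ t x' := by
      intro x₀
      have hWnhds : W ∈ nhds (x₀, φ x₀) := hW.mem_nhds (hφW x₀)
      rw [mem_nhds_prod_iff] at hWnhds
      obtain ⟨V, hV, B, hB, hVB⟩ := hWnhds
      obtain ⟨δ, hδpos, hδB⟩ := Metric.mem_nhds_iff.mp hB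
      refine ⟨δ / 2, ?_⟩
      have hV' : V ∩ φ ⁻¹' Metric.ball (φ x₀) (δ / 2) ∈ nhds x₀ :=
        Filter.inter_mem hV
          (φ.continuous.continuousAt.preimage_mem_nhds
            (Metric.ball_mem_nhds _ (by linarith)))
      filter_upwards [hV'] with x' hx'
      refine ⟨by linarith, fun y hy => ?_⟩
      have : dist (φ x₀) y < δ := by
        calc dist (φ x₀) y ≤ dist (φ x₀) (φ x') + dist (φ x') y := dist_triangle _ _ _
          _ < δ / 2 + δ / 2 := by
              have := hx'.2
              rw [Set.mem_preimage, Metric.mem_ball, dist_comm] at this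
              exact add_lt_add this hy
          _ = δ := by ring
      exact hVB ⟨hx'.1, hδB (Metric.mem_ball'.mpr this)⟩
    obtain ⟨ε, hε⟩ := exists_continuous_forall_mem_convex_of_local_const ht H
    refine ⟨ε, ε.continuous, fun x => (hε x).1, fun ψ hψ => hWU fun x => ?_⟩
    exact (hε x).2 (ψ x) (hψ x)
end

section
/- Let M be a locally compact, σ-compact Hausdorff topological space, let f : M → ℝ be continuous, and let (λ_n) be a sequence of nonzero real numbers with λ_n → 0. Then the sequence of continuous functions (λ_n · f) converges to the zero function in the graph topology on C(M,ℝ) if and only if f has compact support. -/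
/-- For a continuous `f : M → ℝ` and nonzero scalars `λₙ → 0`, the sequence `λₙ • f`
converges to `0` in the graph topology iff `f` has compact support. -/
theorem graph_topology_smul_tendsto_zero_iff
    {M : Type*} [TopologicalSpace M] [LocallyCompactSpace M] [SigmaCompactSpace M]
    [T2Space M] (f : C(M, ℝ)) (l : ℕ → ℝ) (hl0 : ∀ n, l n ≠ 0)
    (hl : Filter.Tendsto l Filter.atTop (nhds 0)) :
    Filter.Tendsto (fun n => l n • f) Filter.atTop (@nhds _ (graphTopology M ℝ) 0) ↔
      HasCompactSupport (f : M → ℝ) := by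
  constructor
  · intro h
    by_contra hcs
    obtain ⟨K⟩ : Nonempty (CompactExhaustion M) := inferInstance
    -- choose points escaping the exhaustion where f ≠ 0
    have hx : ∀ n : ℕ, ∃ x : M, x ∉ K n ∧ f x ≠ 0 := by
      intro n
      by_contra hcon
      push_neg at hcon
      exact hcs (HasCompactSupport.intro (K.isCompact n) fun x hx => hcon x hx)
    choose x hxK hxf using hx
    -- the "bad" closed set
    set A : Set (M × ℝ) := ⋃ n, {(x n, l n * f (x n))} with hA
    have hlocfin : LocallyFinite fun n : ℕ => ({(x n, l n * f (x n))} : Set (M × ℝ)) := by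
      intro p
      obtain ⟨V, hVc, hVnhds⟩ := exists_compact_mem_nhds p.1
      obtain ⟨m, hm⟩ := K.exists_superset_of_isCompact hVc
      refine ⟨V ×ˢ Set.univ, prod_mem_nhds hVnhds Filter.univ_mem, ?_⟩
      apply Set.Finite.subset (Set.finite_Iio m)
      intro n hn
      obtain ⟨q, hq1, hq2⟩ := hn
      rcases hq1 with rfl
      by_contra hnm
      exact hxK n (K.subset (le_of_not_gt (by simpa using hnm)) (hm hq2.1))
    have hAclosed : IsClosed A := hlocfin.isClosed_iUnion fun n => isClosed_singleton
    have hWopen : IsOpen Aᶜ := hAclosed.isOpen_compl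
    set S : Set C(M, ℝ) := {g : C(M, ℝ) | ∀ y : M, (y, g y) ∈ Aᶜ} with hS
    have hSopen : @IsOpen _ (graphTopology M ℝ) S :=
      TopologicalSpace.GenerateOpen.basic S ⟨Aᶜ, hWopen, rfl⟩
    have h0S : (0 : C(M, ℝ)) ∈ S := by
      intro y
      simp only [ContinuousMap.zero_apply, Set.mem_compl_iff, hA, Set.mem_iUnion,
        Set.mem_singleton_iff, Prod.mk.injEq, not_exists, not_and]
      intro n hy hv
      exact mul_ne_zero (hl0 n) (hxf n) hv.symm
    have hmem : S ∈ @nhds _ (graphTopology M ℝ) 0 :=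
      letI := graphTopology M ℝ
      hSopen.mem_nhds h0S
    have hev := h.eventually (p := fun g => g ∈ S) hmem
    obtain ⟨n, hn⟩ := hev.exists
    apply hn (x n)
    simp only [hA, Set.mem_iUnion, Set.mem_singleton_iff]
    exact ⟨n, by simp⟩
  · intro hf
    rw [graphTopology, TopologicalSpace.tendsto_nhds_generateFrom_iff]
    rintro S ⟨W, hWopen, rfl⟩ h0S
    simp only [Set.mem_setOf_eq, ContinuousMap.zero_apply] at h0S
    -- around each point we have a product neighborhood inside W
    have key : ∀ x : M, ∃ U : Set M, IsOpen U ∧ x ∈ U ∧ ∃ ε : ℝ, 0 < ε ∧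
        ∀ y ∈ U, ∀ r : ℝ, |r| < ε → (y, r) ∈ W := by
      intro x
      have hW : W ∈ nhds ((x, 0) : M × ℝ) := hWopen.mem_nhds (h0S x)
      rw [mem_nhds_prod_iff] at hW
      obtain ⟨u, hu, v, hv, huv⟩ := hW
      obtain ⟨U, hUu, hUo, hxU⟩ := mem_nhds_iff.mp hu
      obtain ⟨ε, hε, hball⟩ := Metric.mem_nhds_iff.mp hv
      refine ⟨U, hUo, hxU, ε, hε, fun y hy r hr => ?_⟩
      exact huv ⟨hUu hy, hball (by simpa [Real.dist_eq] using hr)⟩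
    choose U hUo hxU ε hεpos hUε using key
    by_cases hz : ∀ x : M, f x = 0
    · filter_upwards with n x
      simpa [hz x] using h0S x
    · push_neg at hz
      obtain ⟨x0, hx0⟩ := hz
      have hKc : IsCompact (tsupport (f : M → ℝ)) := hf
      obtain ⟨t, -, htcov⟩ := hKc.elim_nhds_subcover U
        (fun y _ => (hUo y).mem_nhds (hxU y))
      have htne : t.Nonempty := by
        have hx0K : x0 ∈ tsupport (f : M → ℝ) := subset_tsupport _ hx0
        obtain ⟨y, hy, -⟩ := Set.mem_iUnion₂.mp (htcov hx0K)
        exact ⟨y, hy⟩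
      set ε0 : ℝ := t.inf' htne ε with hε0
      have hε0pos : 0 < ε0 := by
        rw [hε0, Finset.lt_inf'_iff]
        exact fun y _ => hεpos y
      obtain ⟨C, hC⟩ := hKc.exists_bound_of_continuousOn f.continuous.continuousOn
      have hC1 : (0 : ℝ) < C + 1 := by
        have : ‖f x0‖ ≤ C := hC x0 (subset_tsupport _ hx0)
        nlinarith [norm_nonneg (f x0)]
      have hev : ∀ᶠ n in Filter.atTop, |l n| < ε0 / (C + 1) := by
        have := Metric.tendsto_nhds.mp hl (ε0 / (C + 1)) (div_pos hε0pos hC1)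
        simpa [Real.dist_eq] using this
      filter_upwards [hev] with n hn x
      simp only [Set.mem_setOf_eq, ContinuousMap.smul_apply, smul_eq_mul]
      by_cases hxs : x ∈ tsupport (f : M → ℝ)
      · obtain ⟨y, hyt, hyU⟩ := Set.mem_iUnion₂.mp (htcov hxs)
        refine hUε y x hyU (l n * f x) ?_
        have h1 : |f x| ≤ C := by simpa [Real.norm_eq_abs] using hC x hxs
        have h2 : |l n| * (C + 1) < ε0 := (lt_div_iff₀ hC1).mp hn
        have h3 : ε0 ≤ ε y := Finset.inf'_le _ hyt
        calc |l n * f x| = |l n| * |f x| := abs_mul _ _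
          _ ≤ |l n| * (C + 1) := by
              have := abs_nonneg (l n); nlinarith
          _ < ε0 := h2
          _ ≤ ε y := h3
      · have : f x = 0 := image_eq_zero_of_notMem_tsupport hxs
        simpa [this] using h0S x
end

section
/- Let X be a set equipped with a partial order ≤ and let n ≥ 1. For a nonempty proper subset I of the index set {0,…,n}, let U_I = {x ∈ X^{n+1} : for all i ∈ I and all j ∉ I, ¬(x_i ≤ x_j)}. Then the union of the sets U_I over all nonempty proper subsets I of {0,…,n} is exactly the set of tuples x ∈ X^{n+1} that are not constant, i.e. X^{n+1} minus the diagonal {x : x_0 = x_1 = ⋯ = x_n}. -/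
/-!
A separating index set `I` forces two distinct values, since `xᵢ = xⱼ` would give `xᵢ ≤ xⱼ`.
Conversely, if `x` is not constant, take a maximal value `c` of `x` (its range is finite) and
`I = x⁻¹' {c}`: this is nonempty and proper, and `c ≤ xⱼ` with `xⱼ ≠ c` would contradict the
maximality of `c`.
-/

section SeparatingSet

variable {ι α : Type*}

theorem exists_ne_of_not_le_across [Preorder α] {x : ι → α} {I : Set ι}
    (hI : I.Nonempty) (hI_ne : I ≠ Set.univ) (hx : ∀ i ∈ I, ∀ j ∉ I, ¬ x i ≤ x j) :
    ∃ i j, x i ≠ x j := by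
  obtain ⟨i, hi⟩ := hI
  obtain ⟨j, hj⟩ := Set.ne_univ_iff_exists_notMem I |>.mp hI_ne
  exact ⟨i, j, fun h => hx i hi j hj h.le⟩

theorem not_le_across_preimage_of_maximal [PartialOrder α] {x : ι → α} {c : α}
    (hc : Maximal (· ∈ Set.range x) c) :
    ∀ i ∈ x ⁻¹' {c}, ∀ j ∉ x ⁻¹' {c}, ¬ x i ≤ x j := by
  rintro i rfl j hj hle
  exact hj (hc.eq_of_le (Set.mem_range_self j) hle).symm

theorem exists_not_le_across_of_ne [Finite ι] [PartialOrder α] {x : ι → α} {a b : ι}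
    (hab : x a ≠ x b) :
    ∃ I : Set ι, (I.Nonempty ∧ I ≠ Set.univ) ∧ ∀ i ∈ I, ∀ j ∉ I, ¬ x i ≤ x j := by
  obtain ⟨c, hc⟩ := (Set.finite_range x).exists_maximal (Set.range_nonempty_iff_nonempty.mpr ⟨a⟩)
  obtain ⟨m, hm⟩ := hc.prop
  refine ⟨x ⁻¹' {c}, ⟨⟨m, hm⟩, fun h => hab ?_⟩, not_le_across_preimage_of_maximal hc⟩
  have hall : ∀ k, x k = c := Set.eq_univ_iff_forall.mp h
  exact (hall a).trans (hall b).symm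

end SeparatingSet

theorem causal_cover_of_complement_of_diagonal_general
    {X : Type*} [PartialOrder X] (n : ℕ) :
    (⋃ I ∈ {I : Set (Fin (n + 1)) | I.Nonempty ∧ I ≠ Set.univ},
        {x : Fin (n + 1) → X | ∀ i ∈ I, ∀ j ∉ I, ¬ x i ≤ x j}) =
      {x : Fin (n + 1) → X | ∃ i j : Fin (n + 1), x i ≠ x j} := by
  ext x
  simp only [Set.mem_iUnion, Set.mem_ofPred_eq, exists_prop]
  constructor
  · rintro ⟨I, ⟨hI, hI_ne⟩, hx⟩
    exact exists_ne_of_not_le_across hI hI_ne hx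
  · rintro ⟨a, b, hab⟩
    exact exists_not_le_across_of_ne hab

/-- The sets `U_I = {x | ∀ i ∈ I, ∀ j ∉ I, ¬ xᵢ ≤ xⱼ}`, for `I` a nonempty proper subset of
the index set, cover exactly the complement of the diagonal in `X^(n+1)`. -/
theorem causal_cover_of_complement_of_diagonal
    {X : Type*} [PartialOrder X] (n : ℕ) (hn : 1 ≤ n) :
    (⋃ I ∈ {I : Set (Fin (n + 1)) | I.Nonempty ∧ I ≠ Set.univ},
        {x : Fin (n + 1) → X | ∀ i ∈ I, ∀ j ∉ I, ¬ x i ≤ x j}) =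
      {x : Fin (n + 1) → X | ∃ i j : Fin (n + 1), x i ≠ x j} :=
  causal_cover_of_complement_of_diagonal_general n
end

section
/- Let n, l ∈ ℕ and let g : ℝⁿ → ℝ be an infinitely differentiable function. Define f : ℝⁿ → ℝ by f(x) = ∫₀¹ s^l · g(s • x) ds. Then f is infinitely differentiable and for every x ∈ ℝⁿ it satisfies the radial transport equation Df(x)(x) + (l+1) · f(x) = g(x), where Df(x)(x) denotes the Fréchet derivative of f at x evaluated on the vector x (i.e. x · ∇f(x)). -/
/-!
Differentiating under the integral sign (dominated on a neighbourhood of `x₀` by compactness of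
the segment `[0, 1] • x₀`), the derivative of `x ↦ ∫₀¹ sˡ g(s x) ds` is `x ↦ ∫₀¹ sˡ⁺¹ Dg(s x) ds`,
an integral of the same shape; smoothness follows by induction on the order. The transport
equation is the fundamental theorem of calculus for `s ↦ sˡ⁺¹ g(s x)`, whose derivative is
`sˡ⁺¹ Dg(s x) x + (l + 1) sˡ g(s x)`.
-/

open Set Filter Topology MeasureTheory intervalIntegral

section RadialIntegral

variable {E F G : Type*} [NormedAddCommGroup E] [NormedSpace ℝ E]
  [NormedAddCommGroup F] [NormedSpace ℝ F] [NormedAddCommGroup G]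

noncomputable def radialIntegral (l : ℕ) (g : E → F) (x : E) : F :=
  ∫ s in (0 : ℝ)..1, s ^ l • g (s • x)

theorem exists_eventually_norm_comp_smul_le {φ : E → G} (hφ : Continuous φ) (x₀ : E) :
    ∃ C, ∀ᶠ x in 𝓝 x₀, ∀ s ∈ Icc (0 : ℝ) 1, ‖φ (s • x)‖ ≤ C := by
  obtain ⟨C, hC⟩ := isCompact_Icc.exists_bound_of_continuousOn
    (f := fun s : ℝ => φ (s • x₀)) (by fun_prop)
  refine ⟨C + 1, isCompact_Icc.eventually_forall_of_forall_eventually fun s hs => ?_⟩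
  have hcont : ContinuousAt (fun p : E × ℝ => ‖φ (p.2 • p.1)‖) (x₀, s) := by fun_prop
  exact (hcont.eventually_lt continuousAt_const (by linarith [hC s hs])).mono fun _ => le_of_lt

theorem hasFDerivAt_pow_smul_comp_smul {g : E → F} (hg : Differentiable ℝ g) (l : ℕ) (s : ℝ)
    (x : E) :
    HasFDerivAt (fun y => s ^ l • g (s • y)) (s ^ (l + 1) • fderiv ℝ g (s • x)) x := by
  have hscale : HasFDerivAt (fun y : E => s • y) (s • ContinuousLinearMap.id ℝ E) x :=
    (s • ContinuousLinearMap.id ℝ E).hasFDerivAt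
  refine (((hg (s • x)).hasFDerivAt.comp x hscale).const_smul (s ^ l)).congr_fderiv ?_
  ext y
  simp [pow_succ, smul_smul]

theorem hasFDerivAt_radialIntegral {g : E → F} (hg : ContDiff ℝ 1 g) (l : ℕ) (x₀ : E) :
    HasFDerivAt (radialIntegral l g) (radialIntegral (l + 1) (fderiv ℝ g) x₀) x₀ := by
  obtain ⟨C, hC⟩ := exists_eventually_norm_comp_smul_le (hg.continuous_fderiv one_ne_zero) x₀
  -- otherwise instance search looks for `SecondCountableTopology (E →L[ℝ] F)` and times out
  have := secondCountableTopologyEither_of_left ℝ (E →L[ℝ] F)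
  refine intervalIntegral.hasFDerivAt_integral_of_dominated_of_fderiv_le
    (F := fun x s => s ^ l • g (s • x)) (F' := fun x s => s ^ (l + 1) • fderiv ℝ g (s • x))
    (bound := fun _ => C) hC
    (Eventually.of_forall fun x => (by fun_prop : Continuous _).aestronglyMeasurable)
    ((by fun_prop : Continuous _).intervalIntegrable _ _)
    (by fun_prop : Continuous _).aestronglyMeasurable ?_ intervalIntegrable_const
    (Eventually.of_forall fun s _ x _ =>
      hasFDerivAt_pow_smul_comp_smul (hg.differentiable one_ne_zero) l s x)
  refine Eventually.of_forall fun s hs x hx => ?_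
  rw [uIoc_of_le zero_le_one] at hs
  have hpow : ‖s ^ (l + 1)‖ ≤ 1 := by
    rw [norm_pow, Real.norm_of_nonneg hs.1.le]
    exact pow_le_one₀ hs.1.le hs.2
  calc ‖s ^ (l + 1) • fderiv ℝ g (s • x)‖
      ≤ ‖fderiv ℝ g (s • x)‖ := by
        rw [norm_smul]; exact mul_le_of_le_one_left (norm_nonneg _) hpow
    _ ≤ C := hx s (Ioc_subset_Icc_self hs)

theorem fderiv_radialIntegral {g : E → F} (hg : ContDiff ℝ 1 g) (l : ℕ) :
    fderiv ℝ (radialIntegral l g) = radialIntegral (l + 1) (fderiv ℝ g) :=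
  funext fun x => (hasFDerivAt_radialIntegral hg l x).fderiv

theorem continuous_radialIntegral {g : E → F} (hg : Continuous g) (l : ℕ) :
    Continuous (radialIntegral l g) :=
  continuous_parametric_intervalIntegral_of_continuous' (by fun_prop) 0 1

theorem fderiv_radialIntegral_apply_self_add_smul [CompleteSpace F] {g : E → F}
    (hg : ContDiff ℝ 1 g) (l : ℕ) (x : E) :
    fderiv ℝ (radialIntegral l g) x x + ((l : ℝ) + 1) • radialIntegral l g x = g x := by
  have hgd : Differentiable ℝ g := hg.differentiable one_ne_zero
  have hderiv (s : ℝ) : HasDerivAt (fun s : ℝ => s ^ (l + 1) • g (s • x))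
      (s ^ (l + 1) • fderiv ℝ g (s • x) x + (((l : ℝ) + 1) * s ^ l) • g (s • x)) s := by
    have hpow : HasDerivAt (fun s : ℝ => s ^ (l + 1)) (((l : ℝ) + 1) * s ^ l) s := by
      simpa using hasDerivAt_pow (l + 1) s
    have hray : HasDerivAt (fun s : ℝ => s • x) x s := by
      simpa using (hasDerivAt_id s).smul_const x
    exact hpow.smul ((hgd _).hasFDerivAt.comp_hasDerivAt s hray)
  have hDg_int : IntervalIntegrable (fun s : ℝ => s ^ (l + 1) • fderiv ℝ g (s • x) x) volume 0 1 :=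
    (by fun_prop : Continuous _).intervalIntegrable _ _
  have hg_int : IntervalIntegrable (fun s : ℝ => (((l : ℝ) + 1) * s ^ l) • g (s • x)) volume 0 1 :=
    (by fun_prop : Continuous _).intervalIntegrable _ _
  have hftc : ∫ s in (0 : ℝ)..1,
      (s ^ (l + 1) • fderiv ℝ g (s • x) x + (((l : ℝ) + 1) * s ^ l) • g (s • x)) = g x := by
    simpa using integral_eq_sub_of_hasDerivAt (fun s _ => hderiv s) (hDg_int.add hg_int)
  have hD : fderiv ℝ (radialIntegral l g) x x =
      ∫ s in (0 : ℝ)..1, s ^ (l + 1) • fderiv ℝ g (s • x) x := by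
    rw [fderiv_radialIntegral hg, radialIntegral,
      ContinuousLinearMap.intervalIntegral_apply ((by fun_prop : Continuous _).intervalIntegrable _ _)]
    rfl
  calc fderiv ℝ (radialIntegral l g) x x + ((l : ℝ) + 1) • radialIntegral l g x
      = (∫ s in (0 : ℝ)..1, s ^ (l + 1) • fderiv ℝ g (s • x) x) +
          ∫ s in (0 : ℝ)..1, (((l : ℝ) + 1) * s ^ l) • g (s • x) := by
        simp only [hD, radialIntegral, mul_smul, intervalIntegral.integral_smul]
    _ = g x := by rw [← integral_add hDg_int hg_int, hftc]

end RadialIntegral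

-- a single universe, because the induction passes from `F` to `E →L[ℝ] F`
universe u in
theorem contDiff_radialIntegral {E F : Type u} [NormedAddCommGroup E] [NormedSpace ℝ E]
    [NormedAddCommGroup F] [NormedSpace ℝ F] {g : E → F} {m : ℕ} (hg : ContDiff ℝ m g) (l : ℕ) :
    ContDiff ℝ m (radialIntegral l g) := by
  induction m generalizing F l with
  | zero => exact contDiff_zero.2 (continuous_radialIntegral hg.continuous l)
  | succ m ih =>
    have hg1 : ContDiff ℝ 1 g := hg.of_le (by exact_mod_cast Nat.le_add_left 1 m)
    rw [Nat.cast_succ, contDiff_succ_iff_fderiv] at hg ⊢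
    refine ⟨fun x => (hasFDerivAt_radialIntegral hg1 l x).differentiableAt, by simp, ?_⟩
    rw [fderiv_radialIntegral hg1]
    exact ih hg.2.2 (l + 1)

/-- The function `f x = ∫₀¹ sˡ g(s • x) ds` is smooth and solves the radial transport
equation `Df(x)(x) + (l+1) f(x) = g(x)`. -/
theorem radial_transport_solution
    (n l : ℕ) (g : (Fin n → ℝ) → ℝ) (hg : ContDiff ℝ (⊤ : ℕ∞) g)
    (f : (Fin n → ℝ) → ℝ)
    (hf : f = fun x => ∫ s in (0:ℝ)..1, s ^ l * g (s • x)) :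
    ContDiff ℝ (⊤ : ℕ∞) f ∧
      ∀ x : Fin n → ℝ, fderiv ℝ f x x + (l + 1 : ℝ) * f x = g x := by
  have hf : f = radialIntegral l g := hf
  subst hf
  refine ⟨contDiff_infty.2 fun m => contDiff_radialIntegral (contDiff_infty.1 hg m) l, fun x => ?_⟩
  exact fderiv_radialIntegral_apply_self_add_smul (hg.of_le (by simp)) l x
end
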